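/- Let a = sl₂(k) ⊕ sl₂(k) and x = (e, 0) where e = E₁₂ ∈ sl₂(k) is a nonzero nilpotent element. Then a_x = (k·e) ⊕ sl₂(k), and the set I(a_x) := {y ∈ a_x : dim (a_x)_y > 2} equals (k·e) × {0}. In particular codim_{a_x} I(a_x) = 3. -/

import Mathlib

noncomputable section

/-- Componentwise Lie ring structure on a product of two Lie rings. -/
instance Prod.lieRing (L M : Type*) [LieRing L] [LieRing M] : LieRing (L × M) where
  bracket x y := (⁅x.1, y.1⁆, ⁅x.2, y.2⁆)
  add_lie x y z := Prod.ext (add_lie x.1 y.1 z.1) (add_lie x.2 y.2 z.2)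
  lie_add x y z := Prod.ext (lie_add x.1 y.1 z.1) (lie_add x.2 y.2 z.2)
  lie_self x := Prod.ext (lie_self x.1) (lie_self x.2)
  leibniz_lie x y z := Prod.ext (leibniz_lie x.1 y.1 z.1) (leibniz_lie x.2 y.2 z.2)

/-- Componentwise Lie algebra structure on a product of two Lie algebras. -/
instance Prod.lieAlgebra (k L M : Type*) [CommRing k] [LieRing L] [LieRing M]
    [LieAlgebra k L] [LieAlgebra k M] : LieAlgebra k (L × M) where
  lie_smul c x y := Prod.ext (lie_smul c x.1 y.1) (lie_smul c x.2 y.2)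

open LieAlgebra.SpecialLinear Module

variable (k : Type*) [Field k] [IsAlgClosed k] [CharZero k]

/-- The nonzero nilpotent element `e = E₁₂` of `sl₂`. -/
def Esl2 : ↥(sl (Fin 2) k) := single 0 1 (by decide) (1 : k)

/-!
In the coordinates `(a, b, c) ↦ [[a, b], [c, -a]]` the bracket of `sl₂` is the cross product on
`k³`, up to a factor `2` on two coordinates. Two elements of `sl₂` therefore commute iff they are
linearly dependent, so the centralizer of a nonzero element is the line it spans. Brackets in `a`
are computed componentwise, hence `a_x = k e × sl₂` and, for `y = (c e, y₂) ∈ a_x`,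
`(a_x)_y = k e × (sl₂)_{y₂}`, which has dimension `4` if `y₂ = 0` and `2` otherwise.
-/

open Matrix

def Submodule.prodEquiv {R M N : Type*} [Ring R] [AddCommGroup M] [AddCommGroup N]
    [Module R M] [Module R N] (p : Submodule R M) (q : Submodule R N) :
    p.prod q ≃ₗ[R] p × q where
  toFun z := (⟨z.val.1, z.prop.1⟩, ⟨z.val.2, z.prop.2⟩)
  invFun z := ⟨(z.1.val, z.2.val), z.1.prop, z.2.prop⟩
  map_add' _ _ := rfl
  map_smul' _ _ := rfl
  left_inv _ := rfl
  right_inv _ := rfl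

theorem Submodule.finrank_prod {K M N : Type*} [DivisionRing K] [AddCommGroup M]
    [AddCommGroup N] [Module K M] [Module K N] [FiniteDimensional K M] [FiniteDimensional K N]
    (p : Submodule K M) (q : Submodule K N) :
    finrank K (p.prod q) = finrank K p + finrank K q := by
  rw [(p.prodEquiv q).finrank_eq, Module.finrank_prod]

section Centralizer

variable {R L M : Type*} [CommRing R] [LieRing L] [LieRing M] [LieAlgebra R L] [LieAlgebra R M]

theorem LieAlgebra.ker_ad_prod (x : L × M) :
    LinearMap.ker (ad R (L × M) x) =
      (LinearMap.ker (ad R L x.1)).prod (LinearMap.ker (ad R M x.2)) := by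
  ext z
  simp only [LinearMap.mem_ker, ad_apply, Submodule.mem_prod]
  exact Prod.ext_iff

theorem LieAlgebra.span_singleton_le_ker_ad {x y : L} (hy : y ∈ R ∙ x) :
    R ∙ x ≤ LinearMap.ker (ad R L y) := by
  obtain ⟨c, rfl⟩ := Submodule.mem_span_singleton.1 hy
  rw [Submodule.span_singleton_le_iff_mem, LinearMap.mem_ker, ad_apply, smul_lie, lie_self,
    smul_zero]

end Centralizer

section SpecialLinearTwo

variable {K : Type*} [Field K]

theorem sl2_val_one_one (A : sl (Fin 2) K) : A.val 1 1 = -A.val 0 0 := by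
  have hA : A.val 0 0 + A.val 1 1 = 0 := by
    simpa [trace_fin_two] using LinearMap.mem_ker.1 A.prop
  exact eq_neg_of_add_eq_zero_right hA

def sl2Equiv : sl (Fin 2) K ≃ₗ[K] (Fin 3 → K) where
  toFun A := ![A.val 0 0, A.val 0 1, A.val 1 0]
  invFun v := ⟨!![v 0, v 1; v 2, -v 0], by
    change _ ∈ LinearMap.ker (traceLinearMap (Fin 2) K K)
    simp [trace_fin_two]⟩
  map_add' A B := by ext i; fin_cases i <;> rfl
  map_smul' c A := by ext i; fin_cases i <;> rfl
  left_inv A := by ext i j; fin_cases i <;> fin_cases j <;> simp [sl2_val_one_one]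
  right_inv v := by ext i; fin_cases i <;> rfl

theorem finrank_sl2 : finrank K (sl (Fin 2) K) = 3 := by
  simp [sl2Equiv.finrank_eq]

theorem sl2Equiv_lie (A B : sl (Fin 2) K) :
    sl2Equiv ⁅A, B⁆ = ![(sl2Equiv A ⨯₃ sl2Equiv B) 0, 2 * (sl2Equiv A ⨯₃ sl2Equiv B) 2,
      2 * (sl2Equiv A ⨯₃ sl2Equiv B) 1] := by
  ext i
  fin_cases i <;>
    simp [sl2Equiv, cross_apply, Ring.lie_def, mul_apply, sl2_val_one_one] <;> ring

theorem sl2_lie_eq_zero_iff [NeZero (2 : K)] (A B : sl (Fin 2) K) :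
    ⁅A, B⁆ = 0 ↔ sl2Equiv A ⨯₃ sl2Equiv B = 0 := by
  rw [← sl2Equiv.map_eq_zero_iff, sl2Equiv_lie]
  simp [funext_iff, Fin.forall_fin_succ, two_ne_zero, and_comm]

theorem sl2_ker_ad_eq_span [NeZero (2 : K)] {A : sl (Fin 2) K} (hA : A ≠ 0) :
    LinearMap.ker (LieAlgebra.ad K (sl (Fin 2) K) A) = K ∙ A := by
  have hA' : sl2Equiv A ≠ 0 := sl2Equiv.map_ne_zero_iff.2 hA
  ext B
  rw [LinearMap.mem_ker, LieAlgebra.ad_apply, sl2_lie_eq_zero_iff, Submodule.mem_span_singleton,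
    ← not_iff_not, ← ne_eq, crossProduct_ne_zero_iff_linearIndependent,
    LinearIndependent.pair_iff' hA', not_exists]
  simp_rw [← map_smul, sl2Equiv.injective.ne_iff]

theorem sl2_one_lt_finrank_ker_ad_iff [NeZero (2 : K)] {A : sl (Fin 2) K} :
    1 < finrank K (LinearMap.ker (LieAlgebra.ad K (sl (Fin 2) K) A)) ↔ A = 0 := by
  rcases eq_or_ne A 0 with rfl | hA
  · rw [map_zero, LinearMap.ker_zero, finrank_top, finrank_sl2]
    simp
  · rw [sl2_ker_ad_eq_span hA, finrank_span_singleton hA]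
    simp [hA]

end SpecialLinearTwo

theorem Esl2_ne_zero (K : Type*) [Field K] : Esl2 K ≠ 0 := by
  intro h
  simpa [Esl2] using congrArg (fun A : sl (Fin 2) K => A.val 0 1) h

/-- In `a = sl₂ (k) ⊕ sl₂ (k)`, let `x = (e, 0)` with `e = E₁₂`.  Then
`a_x = (k • e) ⊕ sl₂` and `I(a_x) = {y ∈ a_x | dim (a_x)_y > 2}` equals `(k • e) × {0}`.
In particular `codim_{a_x} I(a_x) = 3`. -/
theorem sl2_sl2_centralizer_irregular_locus :
    LinearMap.ker
        (LieAlgebra.ad k (↥(sl (Fin 2) k) × ↥(sl (Fin 2) k)) (Esl2 k, 0))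
        = (Submodule.span k {Esl2 k}).prod (⊤ : Submodule k ↥(sl (Fin 2) k)) ∧
      Module.finrank k
        ↥(LinearMap.ker
            (LieAlgebra.ad k (↥(sl (Fin 2) k) × ↥(sl (Fin 2) k)) (Esl2 k, 0))) = 4 ∧
      {y : ↥(sl (Fin 2) k) × ↥(sl (Fin 2) k) |
          y ∈ LinearMap.ker
              (LieAlgebra.ad k (↥(sl (Fin 2) k) × ↥(sl (Fin 2) k)) (Esl2 k, 0)) ∧
          2 < Module.finrank k
              ↥(LinearMap.ker
                  (LieAlgebra.ad k (↥(sl (Fin 2) k) × ↥(sl (Fin 2) k)) (Esl2 k, 0))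
                ⊓ LinearMap.ker
                  (LieAlgebra.ad k (↥(sl (Fin 2) k) × ↥(sl (Fin 2) k)) y))}
        = (↑(Submodule.span k {Esl2 k}) : Set ↥(sl (Fin 2) k)) ×ˢ
            ({0} : Set ↥(sl (Fin 2) k)) := by
  have hker : LinearMap.ker (LieAlgebra.ad k (sl (Fin 2) k × sl (Fin 2) k) (Esl2 k, 0)) =
      (k ∙ Esl2 k).prod ⊤ := by
    rw [LieAlgebra.ker_ad_prod, sl2_ker_ad_eq_span (Esl2_ne_zero k), map_zero, LinearMap.ker_zero]
  have hdim : ∀ y ∈ LinearMap.ker (LieAlgebra.ad k (sl (Fin 2) k × sl (Fin 2) k) (Esl2 k, 0)),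
      2 < finrank k
        ↥(LinearMap.ker (LieAlgebra.ad k (sl (Fin 2) k × sl (Fin 2) k) (Esl2 k, 0)) ⊓
          LinearMap.ker (LieAlgebra.ad k (sl (Fin 2) k × sl (Fin 2) k) y)) ↔ y.2 = 0 := by
    intro y hy
    rw [hker] at hy ⊢
    rw [LieAlgebra.ker_ad_prod, Submodule.prod_inf_prod, top_inf_eq,
      inf_eq_left.2 (LieAlgebra.span_singleton_le_ker_ad hy.1), Submodule.finrank_prod,
      finrank_span_singleton (Esl2_ne_zero k), ← sl2_one_lt_finrank_ker_ad_iff]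
    omega
  refine ⟨hker, ?_, ?_⟩
  · rw [hker, Submodule.finrank_prod, finrank_span_singleton (Esl2_ne_zero k), finrank_top,
      finrank_sl2]
  · ext y
    rw [Set.mem_ofPred_eq, and_congr_right (hdim y), hker, Submodule.mem_prod]
    simp
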